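/- The language L(⊡) is less expressive than the language L(⊞) on the class of reflexive bimodal models. Concretely: (i) for every φ ∈ L(⊡) there is ψ ∈ L(⊞) equivalent to φ on all bimodal models (namely ⊞φ ∧ ⊞¬φ for ⊡φ); and (ii) there exist two pointed reflexive bimodal models (M,s) and (M',s') such that M,s ⊨ ⊞p and M',s' ⊭ ⊞p, while for every φ ∈ L(⊡), M,s ⊨ φ iff M',s' ⊨ φ. -/

import Mathlib

/-- Formulas built from propositional variables by ¬, ∧, ⊡ (`gbox`) and ⊞ (`pbox`). -/
inductive Form : Type
  | var : ℕ → Form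
  | neg : Form → Form
  | conj : Form → Form → Form
  | gbox : Form → Form
  | pbox : Form → Form

/-- A bimodal model: a nonempty set of worlds, two accessibility relations and a valuation. -/
structure BiModel : Type 1 where
  S : Type
  ne : Nonempty S
  R1 : S → S → Prop
  R2 : S → S → Prop
  V : ℕ → Set S

/-- Truth of a formula at a world. ⊡φ: all R1-successors and R2-successors agree
on φ. ⊞φ: either φ holds at all R1-successors, or ¬φ holds at all R2-successors. -/
def sat (M : BiModel) : M.S → Form → Prop
  | s, .var n => s ∈ M.V n
  | s, .neg φ => ¬ sat M s φ
  | s, .conj φ ψ => sat M s φ ∧ sat M s ψ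
  | s, .gbox φ => ∀ t u, M.R1 s t → M.R2 s u → (sat M t φ ↔ sat M u φ)
  | s, .pbox φ => (∀ t, M.R1 s t → sat M t φ) ∨ (∀ u, M.R2 s u → ¬ sat M u φ)

/-- φ belongs to the fragment L(⊡) (no occurrence of ⊞). -/
def Form.noPBox : Form → Prop
  | .var _ => True
  | .neg φ => φ.noPBox
  | .conj φ ψ => φ.noPBox ∧ ψ.noPBox
  | .gbox φ => φ.noPBox
  | .pbox _ => False

/-- φ belongs to the fragment L(⊞) (no occurrence of ⊡). -/
def Form.noGBox : Form → Prop
  | .var _ => True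
  | .neg φ => φ.noGBox
  | .conj φ ψ => φ.noGBox ∧ ψ.noGBox
  | .gbox _ => False
  | .pbox φ => φ.noGBox

/-- A model is serial if both relations are serial. -/
def SerialM (M : BiModel) : Prop := (∀ s, ∃ t, M.R1 s t) ∧ (∀ s, ∃ t, M.R2 s t)
/-- A model is transitive if both relations are transitive. -/
def TransM (M : BiModel) : Prop := Transitive M.R1 ∧ Transitive M.R2
/-- A model is Euclidean if both relations are Euclidean. -/
def EuclM (M : BiModel) : Prop :=
  (∀ x y z : M.S, M.R1 x y → M.R1 x z → M.R1 y z) ∧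
  (∀ x y z : M.S, M.R2 x y → M.R2 x z → M.R2 y z)
/-- A model is symmetric if both relations are symmetric. -/
def SymmM (M : BiModel) : Prop := Symmetric M.R1 ∧ Symmetric M.R2
/-- A model is reflexive if both relations are reflexive. -/
def ReflM (M : BiModel) : Prop := Reflexive M.R1 ∧ Reflexive M.R2

/-!
⊡χ says that no R1-successor and R2-successor disagree on χ, which is ⊞χ ∧ ⊞¬χ; translating
every ⊡ this way embeds L(⊡) into L(⊞). Conversely, ⊡ is symmetric in R1 and R2, so L(⊡)
cannot tell a model from the one with its two relations swapped, while ⊞ can: on the worlds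
`true`, `false`, with p true only at `true`, let R1 be the identity and let R2 add an edge
from `true` to `false`. Then ⊞p holds at `true` through R1, and fails there once the
relations are swapped.
-/

lemma sat_gbox_iff (M : BiModel) (s : M.S) (χ : Form) :
    sat M s (.gbox χ) ↔ sat M s (.pbox χ) ∧ sat M s (.pbox (.neg χ)) := by
  simp only [sat, not_not]
  grind

def Form.elimGBox : Form → Form
  | .var n => .var n
  | .neg φ => .neg φ.elimGBox
  | .conj φ ψ => .conj φ.elimGBox ψ.elimGBox
  | .gbox φ => .conj (.pbox φ.elimGBox) (.pbox (.neg φ.elimGBox))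
  | .pbox φ => .pbox φ.elimGBox

lemma Form.noGBox_elimGBox : ∀ φ : Form, φ.elimGBox.noGBox
  | .var _ => trivial
  | .neg φ => φ.noGBox_elimGBox
  | .conj φ ψ => ⟨φ.noGBox_elimGBox, ψ.noGBox_elimGBox⟩
  | .gbox φ => ⟨φ.noGBox_elimGBox, φ.noGBox_elimGBox⟩
  | .pbox φ => φ.noGBox_elimGBox

lemma sat_elimGBox (M : BiModel) : ∀ (φ : Form) (s : M.S), sat M s φ.elimGBox ↔ sat M s φ
  | .var _, _ => Iff.rfl
  | .neg φ, s => not_congr (sat_elimGBox M φ s)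
  | .conj φ ψ, s => and_congr (sat_elimGBox M φ s) (sat_elimGBox M ψ s)
  | .gbox φ, s => by
      have ih := sat_elimGBox M φ
      rw [Form.elimGBox, sat, ← sat_gbox_iff]
      simp only [sat, ih]
  | .pbox φ, s => by
      have ih := sat_elimGBox M φ
      simp only [Form.elimGBox, sat, ih]

def BiModel.swap (M : BiModel) : BiModel := ⟨M.S, M.ne, M.R2, M.R1, M.V⟩

lemma sat_swap_iff (M : BiModel) : ∀ φ : Form, φ.noPBox → ∀ s : M.S,
    (sat M.swap s φ ↔ sat M s φ)
  | .var _, _, _ => Iff.rfl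
  | .neg φ, h, s => not_congr (sat_swap_iff M φ h s)
  | .conj φ ψ, h, s => and_congr (sat_swap_iff M φ h.1 s) (sat_swap_iff M ψ h.2 s)
  | .gbox φ, h, s => by
      have ih := sat_swap_iff M φ h
      change (∀ t u, M.R2 s t → M.R1 s u → (sat M.swap t φ ↔ sat M.swap u φ)) ↔
        ∀ t u, M.R1 s t → M.R2 s u → (sat M t φ ↔ sat M u φ)
      simp only [ih]
      exact ⟨fun H t u ht hu => (H u t hu ht).symm, fun H t u ht hu => (H u t hu ht).symm⟩

def twoWorldModel : BiModel where
  S := Bool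
  ne := ⟨true⟩
  R1 := (· = ·)
  R2 := fun x y => x = true ∨ x = y
  V := fun _ => {true}

lemma reflM_twoWorldModel : ReflM twoWorldModel :=
  ⟨fun _ => rfl, fun _ => Or.inr rfl⟩

lemma sat_twoWorldModel_pbox : sat twoWorldModel true (.pbox (.var 0)) :=
  Or.inl fun _ ht => ht ▸ rfl

lemma not_sat_twoWorldModel_swap_pbox : ¬ sat twoWorldModel.swap true (.pbox (.var 0)) := by
  rintro (h | h)
  · exact Bool.false_ne_true (h false (Or.inl rfl))
  · exact h true rfl rfl

/-- L(⊡) is less expressive than L(⊞) on the class of reflexive bimodal models: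
(i) every L(⊡)-formula has an L(⊞)-equivalent on all models; (ii) there are two
pointed reflexive models distinguished by ⊞p but not by any L(⊡)-formula. -/
theorem stmt5 :
  (∀ φ : Form, φ.noPBox →
      ∃ ψ : Form, ψ.noGBox ∧ ∀ (M : BiModel) (s : M.S), (sat M s φ ↔ sat M s ψ)) ∧
    (∃ (M M' : BiModel) (s : M.S) (s' : M'.S),
      ReflM M ∧ ReflM M' ∧
      sat M s (Form.pbox (Form.var 0)) ∧ ¬ sat M' s' (Form.pbox (Form.var 0)) ∧
      ∀ φ : Form, φ.noPBox → (sat M s φ ↔ sat M' s' φ)) := by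
  refine ⟨fun φ _ => ⟨φ.elimGBox, φ.noGBox_elimGBox, fun M s => (sat_elimGBox M φ s).symm⟩, ?_⟩
  have hrefl := reflM_twoWorldModel
  exact ⟨twoWorldModel, twoWorldModel.swap, true, true, hrefl, ⟨hrefl.2, hrefl.1⟩,
    sat_twoWorldModel_pbox, not_sat_twoWorldModel_swap_pbox,
    fun φ hφ => (sat_swap_iff twoWorldModel φ hφ true).symm⟩
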